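/- arXiv:2511.08529 — 2 statements merged into one kernel-verified Lean document; each statement's English description precedes it below -/
import Mathlib

section
/- For every positive integer k, the number of EVEN colored compositions of k equals the number of ternary strings of length k over the alphabet {0,1,2} such that: every 0 is immediately followed (if anything) by a 0 or a 2, every 1 is immediately followed (if anything) by a 1 or a 0, the string does not begin with a 2, and the string does not end with a 0. -/
/-- The number of EVEN colored compositions of `ℓ`: compositions where each part
in an even position `i` (positions counted from 1) gets a color in `{1, …, pᵢ}`,
i.e. `∑` over compositions of `∏` of the parts in even positions. -/
def evenColoredCount (ℓ : ℕ) : ℕ :=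
  ∑ c : Composition ℓ, ∏ i ∈ Finset.range c.blocks.length,
    if (i + 1) % 2 = 0 then c.blocks.getD i 1 else 1

/-!
Let `e n` and `o n` count the compositions of `n` whose parts in even, resp. odd, positions are
colored. Splitting off the first part gives `e (n + 2) = e (n + 1) + o (n + 1)` and
`o (n + 2) = o (n + 1) + ∑ i ≤ n + 1, e i`. On the string side, let `g n a` count the words of
length `n` that may follow the letter `a` and do not end in `0` (the empty word only if `a ≠ 0`);
peeling off the first letter gives the transfer-matrix recursion
`g (n + 1) 0 = g n 0 + g n 2`, `g (n + 1) 1 = g n 0 + g n 1`,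
`g (n + 1) 2 = g n 0 + g n 1 + g n 2`. A simultaneous induction then shows
`e (n + 1) = g n 0 + g n 1`, `o (n + 1) = g n 0 + g n 2` and `∑ i ≤ n, e i = g n 2`.
Since `1` may be followed exactly by `0` or `1`, the admissible strings of length `k` are the
words that may follow a virtual letter `1`, so there are `g k 1 = e k` of them.
-/

open Finset

namespace Composition

def cons {m n : ℕ} (p : ℕ) (hp : 0 < p) (hn : p + m = n) (c : Composition m) :
    Composition n where
  blocks := p :: c.blocks
  blocks_pos h := (List.mem_cons.mp h).elim (· ▸ hp) c.blocks_pos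
  blocks_sum := by simp [c.blocks_sum, hn]

def tail {n : ℕ} (c : Composition n) : Composition (n - c.blocks.headI) where
  blocks := c.blocks.tail
  blocks_pos h := c.blocks_pos (List.mem_of_mem_tail h)
  blocks_sum := by
    have h := c.blocks_sum
    cases hc : c.blocks <;> simp_all
    omega

theorem sigma_eq_of_blocks_eq {x y : Σ n, Composition n} (h : x.2.blocks = y.2.blocks) :
    x = y := by
  obtain ⟨n, c⟩ := x
  obtain ⟨m, d⟩ := y
  obtain rfl : n = m := by rw [← c.blocks_sum, ← d.blocks_sum, h]
  exact congrArg _ (Composition.ext h)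

theorem exists_blocks_eq_cons {n : ℕ} (c : Composition (n + 1)) :
    ∃ p t, c.blocks = p :: t ∧ 0 < p ∧ p ≤ n + 1 := by
  rcases hc : c.blocks with _ | ⟨p, t⟩
  · simpa [hc] using c.blocks_sum
  · refine ⟨p, t, rfl, c.blocks_pos (by simp [hc]), ?_⟩
    have h := c.blocks_sum
    simp only [hc, List.sum_cons] at h
    omega

theorem sum_succ {M : Type*} [AddCommMonoid M] (n : ℕ) (w : List ℕ → M) :
    ∑ c : Composition (n + 1), w c.blocks =
      ∑ i ∈ range (n + 1), ∑ c : Composition i, w ((n + 1 - i) :: c.blocks) := by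
  rw [sum_sigma']
  refine sum_bij' (fun c _ => ⟨n + 1 - c.blocks.headI, c.tail⟩)
    (fun x hx => cons (n + 1 - x.1) (by grind) (by grind) x.2) (fun c _ => ?_)
    (fun _ _ => mem_univ _) (fun c _ => ?_) (fun x _ => sigma_eq_of_blocks_eq rfl) (fun c _ => ?_)
  all_goals obtain ⟨p, t, hc, hp, hpn⟩ := c.exists_blocks_eq_cons
  · simp only [mem_sigma, mem_range, mem_univ, and_true, hc, List.headI_cons]
    omega
  · ext1
    simp only [cons, tail, hc, List.headI_cons, List.tail_cons, List.cons.injEq, and_true]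
    omega
  · simp only [tail, hc, List.headI_cons, List.tail_cons]
    congr
    omega

end Composition

def colorWeight : Bool → List ℕ → ℕ
  | _, [] => 1
  | b, p :: l => (if b then p else 1) * colorWeight (!b) l

/-- `coloredCount false n` counts the EVEN colored compositions of `n`, and `coloredCount true n`
the ODD colored ones, in which the parts in odd positions carry the colors. -/
def coloredCount (b : Bool) (n : ℕ) : ℕ :=
  ∑ c : Composition n, colorWeight b c.blocks

theorem prod_range_getD_eq_colorWeight (l : List ℕ) (j : ℕ) :
    ∏ i ∈ range l.length, (if (i + j) % 2 = 0 then l.getD i 1 else 1) =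
      colorWeight (decide (Even j)) l := by
  induction l generalizing j with
  | nil => simp [colorWeight]
  | cons p l ih =>
    rw [List.length_cons, prod_range_succ', colorWeight, mul_comm]
    have hparity : (!decide (Even j)) = decide (Even (j + 1)) := by
      rw [Bool.decide_congr Nat.even_add_one, decide_not]
    rw [hparity, ← ih]
    congr 1
    · simp [Nat.even_iff]
    · exact prod_congr rfl fun i _ => by rw [add_right_comm, add_assoc, List.getD_cons_succ]

theorem evenColoredCount_eq_coloredCount (n : ℕ) :
    evenColoredCount n = coloredCount false n := by
  unfold evenColoredCount coloredCount
  refine sum_congr rfl fun c _ => ?_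
  simpa using prod_range_getD_eq_colorWeight c.blocks 1

theorem coloredCount_zero (b : Bool) : coloredCount b 0 = 1 := by
  rw [coloredCount, Fintype.sum_eq_single (Composition.ones 0) fun c hc =>
    (hc (Composition.eq_ones_iff_le_length.mpr c.length.zero_le)).elim]
  rfl

theorem coloredCount_succ (b : Bool) (n : ℕ) :
    coloredCount b (n + 1) =
      ∑ i ∈ range (n + 1), (if b then n + 1 - i else 1) * coloredCount (!b) i := by
  simp only [coloredCount, Composition.sum_succ, colorWeight, mul_sum]

theorem coloredCount_false_succ_succ (n : ℕ) :
    coloredCount false (n + 2) = coloredCount false (n + 1) + coloredCount true (n + 1) := by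
  simp [coloredCount_succ, sum_range_succ _ (n + 1)]

theorem coloredCount_true_succ_succ (n : ℕ) :
    coloredCount true (n + 2) =
      coloredCount true (n + 1) + ∑ i ∈ range (n + 2), coloredCount false i := by
  have hsum : ∑ i ∈ range (n + 1), (n + 2 - i) * coloredCount false i =
      ∑ i ∈ range (n + 1), ((n + 1 - i) * coloredCount false i + coloredCount false i) :=
    sum_congr rfl fun i hi => by
      rw [show n + 2 - i = n + 1 - i + 1 by grind, add_one_mul]
  simp [coloredCount_succ, sum_range_succ _ (n + 1), hsum, sum_add_distrib]
  ring

section Chains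

variable {α : Type*} (R : α → α → Prop) (P : α → Prop)

abbrev ChainsFrom (n : ℕ) (a : α) : Type _ :=
  {l : List α // l.length = n ∧ (a :: l).IsChain R ∧ P (l.getLastD a)}

instance [Finite α] (n : ℕ) (a : α) : Finite (ChainsFrom R P n a) :=
  Finite.of_injective (β := List.Vector α n) (fun l => ⟨l.1, l.2.1⟩)
    fun _ _ h => Subtype.ext (congrArg List.Vector.toList h)

theorem card_chainsFrom_zero (a : α) [Decidable (P a)] :
    Nat.card (ChainsFrom R P 0 a) = if P a then 1 else 0 := by
  split_ifs with ha
  · have : Unique (ChainsFrom R P 0 a) := ⟨⟨⟨[], rfl, .singleton a, ha⟩⟩,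
      fun ⟨l, hl, _⟩ => Subtype.ext (List.length_eq_zero_iff.mp hl)⟩
    exact Nat.card_unique
  · have : IsEmpty (ChainsFrom R P 0 a) :=
      ⟨fun ⟨l, hl, _, hP⟩ => ha (by rwa [List.length_eq_zero_iff.mp hl] at hP)⟩
    exact Nat.card_of_isEmpty

def chainsFromSuccEquiv (n : ℕ) (a : α) :
    ChainsFrom R P (n + 1) a ≃ Σ b : {b // R a b}, ChainsFrom R P n b where
  toFun
    | ⟨b :: l, hl, hR, hP⟩ =>
      ⟨⟨b, (List.isChain_cons_cons.mp hR).1⟩,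
        ⟨l, by simpa using hl, (List.isChain_cons_cons.mp hR).2, by rwa [List.getLastD_cons] at hP⟩⟩
  invFun x := ⟨x.1.1 :: x.2.1, by simp [x.2.2.1], List.isChain_cons_cons.mpr ⟨x.1.2, x.2.2.2.1⟩,
    by rw [List.getLastD_cons]; exact x.2.2.2.2⟩
  left_inv | ⟨_ :: _, _, _, _⟩ => rfl
  right_inv _ := rfl

theorem card_chainsFrom_succ [Fintype α] [DecidableRel R] (n : ℕ) (a : α) :
    Nat.card (ChainsFrom R P (n + 1) a) =
      ∑ b ∈ univ.filter (R a), Nat.card (ChainsFrom R P n b) := by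
  rw [Nat.card_congr (chainsFromSuccEquiv R P n a), Nat.card_sigma]
  exact (sum_subtype _ (fun b => mem_filter_univ (p := R a) b)
    fun b => Nat.card (ChainsFrom R P n b)).symm

end Chains

theorem Nat.card_subtype_ofFn {α : Type*} (k : ℕ) (p : List α → Prop) :
    Nat.card {f : Fin k → α // p (List.ofFn f)} = Nat.card {l : List α // l.length = k ∧ p l} :=
  Nat.card_congr <|
    ((Equiv.vectorEquivFin α k).symm.subtypeEquiv (p := fun f => p (List.ofFn f))
      (q := fun v => p v.toList) fun _ => by simp [Equiv.vectorEquivFin]).trans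
    (Equiv.subtypeSubtypeEquivSubtypeInter _ p)

def ternaryStep (a b : Fin 3) : Prop := (a = 0 → b = 0 ∨ b = 2) ∧ (a = 1 → b = 1 ∨ b = 0)

instance : DecidableRel ternaryStep := fun _ _ => inferInstanceAs (Decidable (_ ∧ _))

noncomputable abbrev ternaryCount (n : ℕ) (a : Fin 3) : ℕ :=
  Nat.card (ChainsFrom ternaryStep (· ≠ 0) n a)

theorem ternaryCount_zero :
    ternaryCount 0 0 = 0 ∧ ternaryCount 0 1 = 1 ∧ ternaryCount 0 2 = 1 := by
  simp [card_chainsFrom_zero]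

theorem ternaryCount_succ (n : ℕ) :
    ternaryCount (n + 1) 0 = ternaryCount n 0 + ternaryCount n 2 ∧
    ternaryCount (n + 1) 1 = ternaryCount n 0 + ternaryCount n 1 ∧
    ternaryCount (n + 1) 2 = ternaryCount n 0 + ternaryCount n 1 + ternaryCount n 2 := by
  simp [ternaryCount, card_chainsFrom_succ, sum_filter, Fin.sum_univ_three, ternaryStep]

theorem coloredCount_succ_eq_ternaryCount (n : ℕ) :
    coloredCount false (n + 1) = ternaryCount n 0 + ternaryCount n 1 ∧
    coloredCount true (n + 1) = ternaryCount n 0 + ternaryCount n 2 ∧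
    ∑ i ∈ range (n + 1), coloredCount false i = ternaryCount n 2 := by
  induction n with
  | zero =>
    simp [coloredCount_succ, coloredCount_zero, ternaryCount_zero]
  | succ n ih =>
    obtain ⟨he, ho, hS⟩ := ih
    obtain ⟨h0, h1, h2⟩ := ternaryCount_succ n
    have hS' : ∑ i ∈ range (n + 2), coloredCount false i = ternaryCount (n + 1) 2 := by
      rw [sum_range_succ, hS, he, h2]
      ring
    refine ⟨?_, ?_, hS'⟩
    · rw [coloredCount_false_succ_succ, he, ho, h0, h1]
      ring
    · rw [coloredCount_true_succ_succ, ho, hS', h0, h2]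

theorem coloredCount_false_eq_ternaryCount_one (n : ℕ) :
    coloredCount false n = ternaryCount n 1 := by
  cases n with
  | zero => rw [coloredCount_zero, ternaryCount_zero.2.1]
  | succ n => rw [(coloredCount_succ_eq_ternaryCount n).1, (ternaryCount_succ n).2.1]

/-- The number of EVEN colored compositions of `k` equals the number of ternary strings
of length `k` in which every 0 is immediately followed (if anything) by a 0 or a 2,
every 1 is immediately followed (if anything) by a 1 or a 0, which do not begin with
a 2 and do not end with a 0. -/
theorem evenColoredCount_eq_ternary (k : ℕ) (hk : 0 < k) :
    evenColoredCount k =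
      Nat.card {f : Fin k → Fin 3 //
        (∀ (i : ℕ) (h : i + 1 < k),
          (f ⟨i, Nat.lt_of_succ_lt h⟩ = 0 → f ⟨i + 1, h⟩ = 0 ∨ f ⟨i + 1, h⟩ = 2) ∧
          (f ⟨i, Nat.lt_of_succ_lt h⟩ = 1 → f ⟨i + 1, h⟩ = 1 ∨ f ⟨i + 1, h⟩ = 0)) ∧
        f ⟨0, hk⟩ ≠ 2 ∧
        f ⟨k - 1, Nat.sub_lt hk Nat.one_pos⟩ ≠ 0} := by
  obtain ⟨m, rfl⟩ := Nat.exists_eq_add_one_of_ne_zero hk.ne'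
  have hstart : ∀ b, ternaryStep 1 b ↔ b ≠ 2 := by decide
  rw [evenColoredCount_eq_coloredCount, coloredCount_false_eq_ternaryCount_one]
  refine (Nat.card_subtype_ofFn (m + 1)
    fun l => (1 :: l).IsChain ternaryStep ∧ l.getLastD 1 ≠ 0).symm.trans
    (Nat.card_congr (Equiv.subtypeEquivRight fun f => ?_))
  have hlast : (List.ofFn f).getLastD 1 = f (Fin.last m) := by
    rw [List.getLastD_eq_getLast?, List.getLast?_eq_some_getLast (by simp), List.getLast_ofFn]
    rfl
  rw [List.ofFn_succ, List.isChain_cons_cons, ← List.ofFn_succ, List.isChain_ofFn, hstart, hlast]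
  exact ⟨fun ⟨⟨h0, hc⟩, hl⟩ => ⟨hc, h0, hl⟩, fun ⟨hc, h0, hl⟩ => ⟨⟨h0, hc⟩, hl⟩⟩
end

section
/- In the ring of formal power series ℤ[[X]], the generating function F_o(X) = Σ_{ℓ≥1} o(ℓ)·X^ℓ of the numbers o(ℓ) of ODD colored compositions satisfies (1 − 3X + 2X² − X³)·F_o(X) = X. -/
/-- The number of ODD colored compositions of `ℓ`: compositions where each part
in an odd position `i` (positions counted from 1) gets a color in `{1, …, pᵢ}`,
i.e. `∑` over compositions of `∏` of the parts in odd positions. -/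
def oddColoredCount (ℓ : ℕ) : ℕ :=
  ∑ c : Composition ℓ, ∏ i ∈ Finset.range c.blocks.length,
    if (i + 1) % 2 = 1 then c.blocks.getD i 1 else 1

/-- The generating function `F_o(X) = ∑_{ℓ ≥ 1} o(ℓ) Xᶫ ∈ ℤ[[X]]` of the numbers of
ODD colored compositions; its constant coefficient is `0`. -/
def Fo : PowerSeries ℤ :=
  PowerSeries.mk fun ℓ => if ℓ = 0 then 0 else (oddColoredCount ℓ : ℤ)

/-!
Splitting off the first block of a composition, the total weight `A` of compositions whose
odd-position parts are weighted by their size, and the total weight `B` of those whose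
even-position parts are, satisfy `A = 1 + X/(1-X)² · B` and `B = 1 + X/(1-X) · A`.
Eliminating `B` gives `(1-X)³ (A - 1) = X(1-X) + X² A`, i.e. `((1-X)³ - X²)(A - 1) = X`,
and `F_o = A - 1`.
-/

namespace Composition

instance : Subsingleton (Composition 0) :=
  ⟨fun c d => Composition.ext ((c.blocks_eq_nil.2 rfl).trans (d.blocks_eq_nil.2 rfl).symm)⟩

def consBlock {n : ℕ} (i : Fin (n + 1)) (c : Composition (n - i)) : Composition (n + 1) where
  blocks := (i + 1) :: c.blocks
  blocks_pos := by
    simp only [List.mem_cons, forall_eq_or_imp]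
    exact ⟨i.succ_pos, fun _ => c.blocks_pos⟩
  blocks_sum := by rw [List.sum_cons, c.blocks_sum]; omega

theorem consBlock_bijective (n : ℕ) :
    Function.Bijective fun p : Σ i : Fin (n + 1), Composition (n - i) => consBlock p.1 p.2 := by
  constructor
  · rintro ⟨i, c⟩ ⟨j, d⟩ h
    obtain ⟨hij, hcd⟩ := List.cons_eq_cons.1 (congrArg blocks h)
    obtain rfl : i = j := Fin.ext (by simpa using hij)
    exact congrArg _ (Composition.ext hcd)
  · intro c
    obtain ⟨p, l, hc⟩ := List.exists_cons_of_ne_nil (c.blocks_eq_nil.not.2 n.succ_ne_zero)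
    have hp : 0 < p := c.blocks_pos (hc ▸ List.mem_cons_self)
    have hsum : p + l.sum = n + 1 := by rw [← List.sum_cons, ← hc, c.blocks_sum]
    refine ⟨⟨⟨p - 1, by omega⟩, ⟨l, fun h => c.blocks_pos (hc ▸ List.mem_cons_of_mem _ h),
      by simp only; omega⟩⟩, Composition.ext ?_⟩
    simp only [consBlock, hc, List.cons.injEq, and_true]
    omega

theorem sum_univ_succ {M : Type*} [AddCommMonoid M] (n : ℕ) (f : Composition (n + 1) → M) :
    ∑ c, f c = ∑ i : Fin (n + 1), ∑ c : Composition (n - i), f (consBlock i c) := by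
  rw [← Fintype.sum_sigma fun p : Σ i : Fin (n + 1), Composition (n - i) => f (consBlock p.1 p.2)]
  exact (Fintype.sum_bijective _ (consBlock_bijective n) _ _ fun _ => rfl).symm

end Composition

open PowerSeries

section AlternatingWeight

variable {R : Type*} [CommSemiring R]

def altProd (f g : ℕ → R) : List ℕ → R
  | [] => 1
  | p :: l => f p * altProd g f l

theorem altProd_eq_prod (f g : ℕ → R) (d : ℕ) (l : List ℕ) :
    altProd f g l =
      ∏ i ∈ Finset.range l.length, if Even i then f (l.getD i d) else g (l.getD i d) := by
  induction l generalizing f g with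
  | nil => rfl
  | cons p l ih =>
    simp only [altProd, ih, List.length_cons, Finset.prod_range_succ', List.getD_cons_succ,
      Nat.even_add_one, ite_not, List.getD_cons_zero, if_pos Even.zero]
    ring

def compWeight (f g : ℕ → R) (n : ℕ) : R :=
  ∑ c : Composition n, altProd f g c.blocks

theorem compWeight_zero (f g : ℕ → R) : compWeight f g 0 = 1 := by
  rw [compWeight, Fintype.sum_subsingleton _ (Composition.ones 0)]
  rfl

theorem compWeight_succ (f g : ℕ → R) (n : ℕ) :
    compWeight f g (n + 1) = ∑ i ∈ Finset.range (n + 1), f (i + 1) * compWeight g f (n - i) := by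
  rw [compWeight, Composition.sum_univ_succ, ← Fin.sum_univ_eq_sum_range
    (fun i => f (i + 1) * compWeight g f (n - i))]
  simp only [Composition.consBlock, altProd, compWeight, Finset.mul_sum]

theorem mk_compWeight (f g : ℕ → R) :
    mk (compWeight f g) = 1 + X * mk (fun n => f (n + 1)) * mk (compWeight g f) := by
  ext (_ | n)
  · simp [compWeight_zero]
  · rw [map_add, mul_assoc, coeff_succ_X_mul, coeff_mul]
    simp only [coeff_mk, coeff_one, n.succ_ne_zero, if_false, zero_add]
    rw [Finset.Nat.sum_antidiagonal_eq_sum_range_succ (fun i j => f (i + 1) * compWeight g f j),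
      compWeight_succ]

end AlternatingWeight

theorem oddColoredCount_eq_compWeight (n : ℕ) :
    (oddColoredCount n : ℤ) = compWeight (fun p => (p : ℤ)) 1 n := by
  simp only [oddColoredCount, compWeight, altProd_eq_prod _ _ 1]
  push_cast
  simp [Nat.odd_iff.symm, ← Nat.not_even_iff_odd, Nat.even_add_one]

theorem Fo_eq_mk_compWeight_sub_one : Fo = mk (compWeight (fun p => (p : ℤ)) 1) - 1 := by
  ext (_ | n)
  · simp [Fo, compWeight_zero]
  · simp [Fo, oddColoredCount_eq_compWeight]

/-- `(1 - 3X + 2X² - X³) · F_o(X) = X` in `ℤ[[X]]`. -/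
theorem Fo_generating_function :
    (1 - 3 * PowerSeries.X + 2 * PowerSeries.X ^ 2 - PowerSeries.X ^ 3) * Fo =
      PowerSeries.X := by
  set A := mk (compWeight (fun p => (p : ℤ)) 1)
  set B := mk (compWeight 1 (fun p => (p : ℤ)))
  have hA : A = 1 + X * mk (fun n => ((n + 1 : ℕ) : ℤ)) * B := mk_compWeight _ _
  have hB : B = 1 + X * mk 1 * A := mk_compWeight _ _
  have hP : mk (fun n => ((n + 1 : ℕ) : ℤ)) * (1 - X) ^ 2 = 1 := by
    simpa [add_comm] using mk_add_choose_mul_one_sub_pow_eq_one ℤ 1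
  have hQ : (mk 1 : PowerSeries ℤ) * (1 - X) = 1 := mk_one_mul_one_sub_eq_one ℤ
  rw [Fo_eq_mk_compWeight_sub_one]
  linear_combination (1 - X) ^ 3 * hA + (1 - X) * X * B * hP + (1 - X) * X * hB + X ^ 2 * A * hQ
end
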